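/- arXiv:1710.04279 — 2 statements merged into one kernel-verified Lean document; each statement's English description precedes it below -/
import Mathlib

section
/- Every real square matrix K admits a unique decomposition K = K_real + K_imaginary + K_nilpotent into three pairwise commuting real matrices, where K_real is diagonalizable (over ℂ) with all eigenvalues real, K_imaginary is diagonalizable with all eigenvalues purely imaginary, and K_nilpotent is nilpotent. -/
open Matrix

/-- `A` is diagonalizable over `ℂ` and every eigenvalue (diagonal entry of the
diagonal form) satisfies the predicate `pred`. -/
def DiagonalizableWithSpec {n : ℕ} (pred : ℂ → Prop)
    (A : Matrix (Fin n) (Fin n) ℝ) : Prop :=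
  ∃ P D : Matrix (Fin n) (Fin n) ℂ, IsUnit P.det ∧ D.IsDiag ∧
    A.map (algebraMap ℝ ℂ) = P * D * P⁻¹ ∧ ∀ i, pred (D i i)

/-!
Over `ℂ`, let `s` act as `μ` on each generalized eigenspace of `K`; acting by `Re μ` and by
`i Im μ` instead splits `s` into the real and imaginary parts, and `K - s` is nilpotent. These parts
are real matrices because `K` commutes with complex conjugation, which carries the generalized
eigenspace for `μ` to the one for `μ̄`. For uniqueness, let `K = R + I + N` be another
decomposition: `K` differs from the semisimple `R + I` by a commuting nilpotent, so a joint
eigenvector of `R` and `I` with eigenvalues `a` (real) and `b` (imaginary) lies in the generalized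
eigenspace of `K` for `a + b`, where the real and imaginary parts act as `a` and `b`.
-/

open Set Polynomial Module

theorem LinearMap.ext_of_iSup_eq_top {R M N ι : Type*} [Semiring R] [AddCommMonoid M]
    [Module R M] [AddCommMonoid N] [Module R N] {p : ι → Submodule R M} (hp : ⨆ i, p i = ⊤)
    {φ ψ : M →ₗ[R] N} (h : ∀ i, ∀ v ∈ p i, φ v = ψ v) : φ = ψ := by
  refine LinearMap.ext_on (s := ⋃ i, (p i : Set M)) ?_ ?_
  · rw [← Submodule.iSup_eq_span, hp]
  · simp only [Set.EqOn, Set.mem_iUnion]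
    rintro v ⟨i, hv⟩
    exact h i v hv

namespace Module.End

section Ring

variable {R M : Type*} [CommRing R] [AddCommGroup M] [Module R M]

theorem pow_apply_eq_of_eqOn {φ ψ : End R M} {p : Submodule R M} (hψ : MapsTo ψ p p)
    (h : ∀ v ∈ p, φ v = ψ v) (k : ℕ) : ∀ v ∈ p, (φ ^ k) v = (ψ ^ k) v := by
  induction k with
  | zero => simp
  | succ k ih =>
    intro v hv
    rw [pow_succ, pow_succ, mul_apply, mul_apply, h v hv, ih _ (hψ hv)]

theorem maxGenEigenspace_le_of_isNilpotent_sub [IsNoetherian R M] {f g : End R M}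
    (hfg : Commute f g) (hnil : IsNilpotent (f - g)) (μ : R) :
    g.maxGenEigenspace μ ≤ f.maxGenEigenspace μ := by
  set p := g.maxGenEigenspace μ
  have hg : ∀ v ∈ p, (g - algebraMap R (End R M) μ) v ∈ p := fun _ hv =>
    mapsTo_maxGenEigenspace_of_comm (Algebra.mul_sub_algebraMap_commutes g μ) μ hv
  have hfg' : ∀ v ∈ p, (f - g) v ∈ p := fun _ hv =>
    mapsTo_maxGenEigenspace_of_comm (hfg.symm.sub_right rfl) μ hv
  have hf : ∀ v ∈ p, (f - algebraMap R (End R M) μ) v ∈ p := fun v hv => by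
    simpa using p.add_mem (hg v hv) (hfg' v hv)
  -- `f - μ = (g - μ) + (f - g)` is a sum of commuting nilpotents on `p`
  obtain ⟨k, hk⟩ : IsNilpotent ((f - algebraMap R (End R M) μ).restrict hf) := by
    have hsplit : (f - algebraMap R (End R M) μ).restrict hf =
        (g - algebraMap R (End R M) μ).restrict hg + (f - g).restrict hfg' := by
      ext; simp
    rw [hsplit]
    exact (LinearMap.restrict_commute ((hfg.symm.sub_right rfl).sub_left
      (Algebra.commute_algebraMap_left μ _)) hg hfg').isNilpotent_add
      (g.isNilpotent_restrict_maxGenEigenspace_sub_algebraMap μ hg)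
      (isNilpotent.restrict hfg' hnil)
  intro v hv
  refine (mem_maxGenEigenspace f μ v).mpr ⟨k, ?_⟩
  have := congr(($hk ⟨v, hv⟩ : M))
  simp only [pow_restrict _, LinearMap.coe_restrict_apply] at this
  simpa [algebraMap_end_eq_smul_id, ← one_eq_id] using this

end Ring

section Star

variable {R M : Type*} [CommRing R] [StarRing R] [AddCommGroup M] [StarAddMonoid M] [Module R M]
  [StarModule R M]

theorem star_mem_maxGenEigenspace {f : End R M} (hf : ∀ v, f (star v) = star (f v)) {μ : R}
    {v : M} (hv : v ∈ f.maxGenEigenspace μ) : star v ∈ f.maxGenEigenspace (star μ) := by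
  have hpow : ∀ k : ℕ, ∀ w : M, ((f - star μ • 1) ^ k) (star w) = star (((f - μ • 1) ^ k) w) := by
    intro k
    induction k with
    | zero => simp
    | succ k ih =>
      intro w
      rw [pow_succ, pow_succ, mul_apply, mul_apply, ← ih]
      simp [hf, star_smul]
  obtain ⟨k, hk⟩ := (mem_maxGenEigenspace f μ v).mp hv
  exact (mem_maxGenEigenspace _ _ _).mpr ⟨k, by rw [hpow, hk, star_zero]⟩

end Star

section Spectral

variable {K V : Type*} [Field K] [IsAlgClosed K] [AddCommGroup V] [Module K V]
  [FiniteDimensional K V] (f : End K V)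

theorem isInternal_maxGenEigenspace [DecidableEq K] : DirectSum.IsInternal f.maxGenEigenspace :=
  DirectSum.isInternal_submodule_of_iSupIndep_of_iSup_eq_top f.independent_maxGenEigenspace
    f.iSup_maxGenEigenspace_eq_top

/-- `g` applied to the semisimple part of `f`; `f.spectralMap id` is that semisimple part. -/
noncomputable def spectralMap (g : K → K) : End K V :=
  open Classical in
  DirectSum.toModule K K V (fun μ => g μ • (f.maxGenEigenspace μ).subtype) ∘ₗ
    (LinearEquiv.ofBijective (DirectSum.coeLinearMap f.maxGenEigenspace)
      f.isInternal_maxGenEigenspace).symm.toLinearMap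

variable {f}

theorem spectralMap_apply_of_mem (g : K → K) {μ : K} {v : V} (hv : v ∈ f.maxGenEigenspace μ) :
    f.spectralMap g v = g μ • v := by
  classical
  have : (LinearEquiv.ofBijective (DirectSum.coeLinearMap f.maxGenEigenspace)
      f.isInternal_maxGenEigenspace).symm v =
      DirectSum.lof K K (fun μ => f.maxGenEigenspace μ) μ ⟨v, hv⟩ :=
    (LinearEquiv.symm_apply_eq _).mpr (DirectSum.coeLinearMap_of f.maxGenEigenspace μ ⟨v, hv⟩).symm
  simp [spectralMap, this, DirectSum.toModule_lof]

theorem ext_of_maxGenEigenspace {φ ψ : End K V}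
    (h : ∀ μ, ∀ v ∈ f.maxGenEigenspace μ, φ v = ψ v) : φ = ψ :=
  LinearMap.ext_of_iSup_eq_top f.iSup_maxGenEigenspace_eq_top h

variable (f)

theorem commute_spectralMap (g : K → K) : Commute f (f.spectralMap g) :=
  ext_of_maxGenEigenspace (f := f) fun μ v hv => by
    have hfv := mapsTo_maxGenEigenspace_of_comm (Commute.refl f) μ hv
    simp [spectralMap_apply_of_mem g hv, spectralMap_apply_of_mem g hfv]

theorem commute_spectralMap_spectralMap (g h : K → K) :
    Commute (f.spectralMap g) (f.spectralMap h) :=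
  ext_of_maxGenEigenspace (f := f) fun μ v hv => by
    simp [spectralMap_apply_of_mem _ hv, smul_smul, mul_comm]

theorem spectralMap_add (g h : K → K) :
    f.spectralMap g + f.spectralMap h = f.spectralMap (g + h) :=
  ext_of_maxGenEigenspace (f := f) fun μ v hv => by
    simp [spectralMap_apply_of_mem _ hv, add_smul]

theorem isNilpotent_sub_spectralMap_id : IsNilpotent (f - f.spectralMap id) := by
  refine ⟨Module.finrank K V, ext_of_maxGenEigenspace (f := f) fun μ v hv => ?_⟩
  have hmaps : MapsTo (f - μ • (1 : End K V)) (f.maxGenEigenspace μ) (f.maxGenEigenspace μ) :=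
    mapsTo_maxGenEigenspace_of_comm
      ((Commute.refl f).sub_right ((Commute.one_right f).smul_right μ)) μ
  rw [pow_apply_eq_of_eqOn hmaps (fun w hw => by simp [spectralMap_apply_of_mem id hw]) _ v hv]
  rw [maxGenEigenspace_eq_genEigenspace_finrank, mem_genEigenspace_nat] at hv
  simpa using hv

theorem exists_basis_spectralMap_eq_toLin_diagonal {ι : Type*} [Fintype ι] [DecidableEq ι]
    (b₀ : Basis ι K V) :
    ∃ (b : Basis ι K V) (μ : ι → K), ∀ g, f.spectralMap g = toLin b b (diagonal (g ∘ μ)) := by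
  classical
  let b := f.isInternal_maxGenEigenspace.collectedBasis fun μ => Module.finBasis K _
  let e := b.indexEquiv b₀
  refine ⟨b.reindex e, fun i => (e.symm i).1, fun g => (b.reindex e).ext fun i => ?_⟩
  have hmem : b (e.symm i) ∈ f.maxGenEigenspace (e.symm i).1 :=
    f.isInternal_maxGenEigenspace.collectedBasis_mem _ (e.symm i)
  rw [toLin_self]
  simp [Basis.reindex_apply, spectralMap_apply_of_mem g hmem, diagonal_apply]

theorem spectralMap_star [StarRing K] [StarAddMonoid V] [StarModule K V]
    (hf : ∀ v, f (star v) = star (f v)) {g : K → K} (hg : ∀ z, g (star z) = star (g z)) (v : V) :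
    f.spectralMap g (star v) = star (f.spectralMap g v) := by
  have hv : v ∈ ⨆ μ, f.maxGenEigenspace μ := by
    rw [iSup_maxGenEigenspace_eq_top]; trivial
  refine Submodule.iSup_induction _ (motive := fun w =>
    f.spectralMap g (star w) = star (f.spectralMap g w)) hv (fun μ w hw => ?_) (by simp)
    fun x y hx hy => by rw [star_add, map_add, map_add, star_add, hx, hy]
  rw [spectralMap_apply_of_mem g (star_mem_maxGenEigenspace hf hw),
    spectralMap_apply_of_mem g hw, star_smul, hg]

end Spectral

section Decomposition

open Complex

variable {V : Type*} [AddCommGroup V] [Module ℂ V] [FiniteDimensional ℂ V]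

theorem eq_spectralMap_of_eq_add_add {f r i m : End ℂ V} (hsum : f = r + i + m)
    (hri : Commute r i) (hrm : Commute r m) (him : Commute i m)
    (hr : r.IsSemisimple) (hi : i.IsSemisimple)
    (hr_spec : ∀ μ, r.HasEigenvalue μ → μ.im = 0) (hi_spec : ∀ μ, i.HasEigenvalue μ → μ.re = 0)
    (hm : IsNilpotent m) :
    r = f.spectralMap (fun z => (z.re : ℂ)) ∧ i = f.spectralMap (fun z => z.im * I) := by
  have hfs : Commute f (r + i) := by
    rw [hsum]; exact (Commute.refl _).add_left (hrm.add_left him).symm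
  have hnil : IsNilpotent (f - (r + i)) := by rwa [hsum, add_sub_cancel_left]
  have hcomm : Pairwise fun j k => Commute (![r, i] j) (![r, i] k) := by
    intro j k hjk
    fin_cases j <;> fin_cases k <;> simp_all [hri.symm]
  have htop := iSup_iInf_maxGenEigenspace_eq_top_of_iSup_maxGenEigenspace_eq_top_of_commute _
    hcomm fun j => iSup_maxGenEigenspace_eq_top _
  have key : ∀ χ : Fin 2 → ℂ, ∀ v ∈ ⨅ j, (![r, i] j).maxGenEigenspace (χ j),
      r v = f.spectralMap (fun z => (z.re : ℂ)) v ∧ i v = f.spectralMap (fun z => z.im * I) v := by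
    intro χ v hv
    rw [Submodule.mem_iInf] at hv
    have hrv : v ∈ r.eigenspace (χ 0) := by
      simpa [hr.isFinitelySemisimple.maxGenEigenspace_eq_eigenspace] using hv 0
    have hiv : v ∈ i.eigenspace (χ 1) := by
      simpa [hi.isFinitelySemisimple.maxGenEigenspace_eq_eigenspace] using hv 1
    rcases eq_or_ne v 0 with rfl | hv0
    · simp
    have ha := hr_spec _ (hasEigenvalue_of_hasEigenvector ⟨hrv, hv0⟩)
    have hb := hi_spec _ (hasEigenvalue_of_hasEigenvector ⟨hiv, hv0⟩)
    rw [mem_eigenspace_iff] at hrv hiv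
    have hvf : v ∈ f.maxGenEigenspace (χ 0 + χ 1) :=
      maxGenEigenspace_le_of_isNilpotent_sub hfs hnil _ <| eigenspace_le_maxGenEigenspace <|
        mem_eigenspace_iff.mpr (by simp [hrv, hiv, add_smul])
    rw [spectralMap_apply_of_mem _ hvf, spectralMap_apply_of_mem _ hvf, hrv, hiv]
    constructor <;> congr 1 <;> apply Complex.ext <;> simp [ha, hb]
  exact ⟨LinearMap.ext_of_iSup_eq_top htop fun χ v hv => (key χ v hv).1,
    LinearMap.ext_of_iSup_eq_top htop fun χ v hv => (key χ v hv).2⟩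

end Decomposition

end Module.End

section Matrix

variable {ι : Type*} [Fintype ι] [DecidableEq ι]

theorem Module.End.isSemisimple_toLin_diagonal {K V : Type*} [Field K] [AddCommGroup V]
    [Module K V] (b : Basis ι K V) (d : ι → K) : IsSemisimple (toLin b b (diagonal d)) := by
  classical
  refine isSemisimple_of_squarefree_aeval_eq_zero (p := ∏ z ∈ Finset.univ.image d, (X - C z))
    ((separable_prod_X_sub_C_iff' (f := id)).mpr (by simp)).squarefree (b.ext fun i => ?_)
  rw [aeval_apply_of_hasEigenvector (hasEigenvector_toLin_diagonal d i b), eval_prod,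
    Finset.prod_eq_zero (Finset.mem_image_of_mem d (Finset.mem_univ i)) (by simp), zero_smul,
    LinearMap.zero_apply]

theorem LinearMap.toMatrix'_toLin {K : Type*} [Field K] (b : Basis ι K (ι → K))
    (M : Matrix ι ι K) :
    LinearMap.toMatrix' (toLin b b M) =
      (Pi.basisFun K ι).toMatrix b * M * ((Pi.basisFun K ι).toMatrix b)⁻¹ := by
  rw [← LinearMap.toMatrix_eq_toMatrix', ← basis_toMatrix_mul_linearMap_toMatrix_mul_basis_toMatrix
    (b' := b) (c' := b), LinearMap.toMatrix_toLin,
    inv_eq_right_inv (Basis.toMatrix_mul_toMatrix_flip _ _)]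

noncomputable def Matrix.complexToLin' : Matrix ι ι ℝ →+* Module.End ℂ (ι → ℂ) :=
  (Matrix.toLinAlgEquiv' : Matrix ι ι ℂ ≃ₐ[ℂ] _).toRingEquiv.toRingHom.comp
    (algebraMap ℝ ℂ).mapMatrix

theorem Matrix.complexToLin'_apply (X : Matrix ι ι ℝ) :
    complexToLin' X = toLin' (X.map (algebraMap ℝ ℂ)) :=
  rfl

theorem Matrix.complexToLin'_injective : Function.Injective (complexToLin' (ι := ι)) :=
  toLin'.injective.comp (Matrix.map_injective Complex.ofReal_injective)

theorem Matrix.complexToLin'_star (X : Matrix ι ι ℝ) (v : ι → ℂ) :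
    complexToLin' X (star v) = star (complexToLin' X v) := by
  ext i
  simp [complexToLin'_apply, mulVec, dotProduct, star_sum]

theorem Matrix.exists_complexToLin'_eq {φ : Module.End ℂ (ι → ℂ)}
    (hφ : ∀ v, φ (star v) = star (φ v)) : ∃ X : Matrix ι ι ℝ, complexToLin' X = φ := by
  refine ⟨(LinearMap.toMatrix' φ).map Complex.re, LinearMap.toMatrix'.injective ?_⟩
  ext i j
  have hreal : star (φ (Pi.single j 1) i) = φ (Pi.single j 1) i := by
    rw [← Pi.star_apply, ← hφ, ← Pi.single_star, star_one]
  simpa [complexToLin'_apply, LinearMap.toMatrix'_apply] using Complex.conj_eq_iff_re.mp hreal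

end Matrix

section DiagonalizableWithSpec

variable {n : ℕ} {pred : ℂ → Prop} {X : Matrix (Fin n) (Fin n) ℝ}

theorem diagonalizableWithSpec_iff_exists_basis :
    DiagonalizableWithSpec pred X ↔ ∃ (b : Basis (Fin n) ℂ (Fin n → ℂ)) (d : Fin n → ℂ),
      (∀ i, pred (d i)) ∧ complexToLin' X = toLin b b (diagonal d) := by
  constructor
  · rintro ⟨P, D, hP, hD, hX, hpred⟩
    let b := (Pi.basisFun ℂ (Fin n)).map (P.toLinearEquiv (Pi.basisFun ℂ (Fin n)) hP)
    have hb : (Pi.basisFun ℂ (Fin n)).toMatrix b = P := by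
      ext i j
      simp [b, Basis.toMatrix_apply, toLin_eq_toLin', mulVec_single]
    refine ⟨b, D.diag, hpred, LinearMap.toMatrix'.injective ?_⟩
    rw [LinearMap.toMatrix'_toLin, hb, hD.diagonal_diag, complexToLin'_apply,
      LinearMap.toMatrix'_toLin', hX]
  · rintro ⟨b, d, hd, hX⟩
    refine ⟨(Pi.basisFun ℂ _).toMatrix b, diagonal d,
      isUnit_det_of_right_inverse (Basis.toMatrix_mul_toMatrix_flip _ _), isDiag_diagonal d, ?_,
      by simpa using hd⟩
    rw [← LinearMap.toMatrix'_toLin, ← hX, complexToLin'_apply, LinearMap.toMatrix'_toLin']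

theorem DiagonalizableWithSpec.isSemisimple (h : DiagonalizableWithSpec pred X) :
    (complexToLin' X).IsSemisimple := by
  obtain ⟨b, d, -, hX⟩ := diagonalizableWithSpec_iff_exists_basis.mp h
  exact hX ▸ Module.End.isSemisimple_toLin_diagonal b d

theorem DiagonalizableWithSpec.pred_of_hasEigenvalue (h : DiagonalizableWithSpec pred X) {μ : ℂ}
    (hμ : (complexToLin' X).HasEigenvalue μ) : pred μ := by
  obtain ⟨b, d, hd, hX⟩ := diagonalizableWithSpec_iff_exists_basis.mp h
  obtain ⟨i, rfl⟩ := (hasEigenvalue_toLin_diagonal_iff d b).mp (hX ▸ hμ)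
  exact hd i

theorem diagonalizableWithSpec_of_eq_spectralMap {K : Matrix (Fin n) (Fin n) ℝ} {g : ℂ → ℂ}
    (hX : complexToLin' X = (complexToLin' K).spectralMap g) (hg : ∀ z, pred (g z)) :
    DiagonalizableWithSpec pred X := by
  obtain ⟨b, μ, hb⟩ :=
    (complexToLin' K).exists_basis_spectralMap_eq_toLin_diagonal (Pi.basisFun ℂ (Fin n))
  exact diagonalizableWithSpec_iff_exists_basis.mpr ⟨b, g ∘ μ, fun i => hg _, hX.trans (hb g)⟩

end DiagonalizableWithSpec

/-- Refined Jordan–Chevalley decomposition: every real square matrix `K` has a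
unique decomposition `K = K_real + K_imaginary + K_nilpotent` into pairwise
commuting parts, with `K_real` diagonalizable over `ℂ` with real spectrum,
`K_imaginary` diagonalizable with purely imaginary spectrum, and
`K_nilpotent` nilpotent. -/
theorem stmt_5 (n : ℕ) (K : Matrix (Fin n) (Fin n) ℝ) :
    ∃! T : Matrix (Fin n) (Fin n) ℝ × Matrix (Fin n) (Fin n) ℝ ×
        Matrix (Fin n) (Fin n) ℝ,
      K = T.1 + T.2.1 + T.2.2 ∧
      Commute T.1 T.2.1 ∧ Commute T.1 T.2.2 ∧ Commute T.2.1 T.2.2 ∧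
      DiagonalizableWithSpec (fun z => z.im = 0) T.1 ∧
      DiagonalizableWithSpec (fun z => z.re = 0) T.2.1 ∧
      IsNilpotent T.2.2 := by
  set f := complexToLin' K
  obtain ⟨Kr, hKr⟩ := exists_complexToLin'_eq
    (f.spectralMap_star (complexToLin'_star K) (g := fun z => (z.re : ℂ)) (by simp))
  obtain ⟨Ki, hKi⟩ := exists_complexToLin'_eq
    (f.spectralMap_star (complexToLin'_star K) (g := fun z => z.im * Complex.I) (by simp))
  have hKn : complexToLin' (K - Kr - Ki) = f - f.spectralMap id := by
    rw [map_sub, map_sub, hKr, hKi, sub_sub, Module.End.spectralMap_add]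
    congr 2; funext z; simp [Complex.re_add_im]
  have hinj := complexToLin'_injective (ι := Fin n)
  refine ⟨(Kr, Ki, K - Kr - Ki), ⟨by rw [sub_sub, add_sub_cancel], ?_, ?_, ?_, ?_, ?_, ?_⟩, ?_⟩
  · rw [← commute_map_iff hinj, hKr, hKi]
    exact f.commute_spectralMap_spectralMap _ _
  · rw [← commute_map_iff hinj, hKr, hKn]
    exact (f.commute_spectralMap _).symm.sub_right (f.commute_spectralMap_spectralMap _ _)
  · rw [← commute_map_iff hinj, hKi, hKn]
    exact (f.commute_spectralMap _).symm.sub_right (f.commute_spectralMap_spectralMap _ _)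
  · exact diagonalizableWithSpec_of_eq_spectralMap hKr (by simp)
  · exact diagonalizableWithSpec_of_eq_spectralMap hKi (by simp)
  · rw [← IsNilpotent.map_iff hinj, hKn]
    exact f.isNilpotent_sub_spectralMap_id
  · rintro ⟨R, I, N⟩ ⟨hK, hRI, hRN, hIN, hR, hI, hN⟩
    obtain ⟨hR', hI'⟩ := Module.End.eq_spectralMap_of_eq_add_add (f := f)
      (by rw [show f = _ from congrArg complexToLin' hK, map_add, map_add])
      (hRI.map _) (hRN.map _) (hIN.map _) hR.isSemisimple hI.isSemisimple
      (fun _ => hR.pred_of_hasEigenvalue) (fun _ => hI.pred_of_hasEigenvalue) (hN.map _)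
    obtain rfl : R = Kr := hinj (hR'.trans hKr.symm)
    obtain rfl : I = Ki := hinj (hI'.trans hKi.symm)
    rw [hK]
    simp only [sub_sub, add_sub_cancel_left]
end

section
/- Let exp(tK) act on a Jordan chain v₁,...,v_m (N v_l = v_{l-1}) of a single Jordan block with eigenvalue λ ∈ ℝ. The volume (Gram determinant) of the parallelepiped spanned by exp(tK)v_{r₁},...,exp(tK)v_{r_n} for indices 1 ≤ r₁ < ... < r_n ≤ m satisfies: (1/t)·log Vol → n·λ and (log Vol - n λ t)/log t → (Σⱼ rⱼ) - n(n+1)/2 as t → ∞. -/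
/-!
Write `exp(tK) e_{r_j} = e^{λt} W(t)_j` with `W(t) = diag(t^{r_j}) · A · diag(t^{-k})`, where
`A_{jk} = 1/(r_j - k)!` for `k ≤ r_j`. By Cauchy–Binet, `det(W Wᵀ) = ∑_s det(W_{·s})²` over
increasing column selections `s`, and `det W_{·s} = t^{∑ r_j - ∑ s_i} det A_{·s}`. Since `s_i ≥ i`,
the highest power of `t` comes from `s = (0, …, n-1)`, whose minor `det A_{·s}` is, after scaling
the rows by `r_j!`, the Vandermonde determinant of the distinct `r_j`, hence nonzero. So
`Vol(t) ~ c · e^{nλt} · t^{∑ (r_j - j)}` with `c > 0`, and taking logarithms gives both limits.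
-/

open Matrix Filter

/-- The nilpotent shift on `ℝ^m`. -/
def shiftMatrix (m : ℕ) : Matrix (Fin m) (Fin m) ℝ :=
  Matrix.of fun i j => if (i : ℕ) + 1 = (j : ℕ) then 1 else 0

/-- Volume (square root of the Gram determinant w.r.t. the Euclidean inner
product) of the parallelepiped spanned by vectors `w 0, …, w (n-1)`. -/
noncomputable def gramVol {n m : ℕ} (w : Fin n → Fin m → ℝ) : ℝ :=
  Real.sqrt (Matrix.det (Matrix.of fun i j => ∑ k, w i k * w j k))

open Finset Equiv Topology
open scoped Nat

theorem NormedSpace.exp_eq_sum_range_of_pow_eq_zero {𝕂 𝔸 : Type*} [Field 𝕂] [CharZero 𝕂] [Ring 𝔸]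
    [Algebra 𝕂 𝔸] [TopologicalSpace 𝔸] [IsTopologicalRing 𝔸] {x : 𝔸} {k : ℕ} (h : x ^ k = 0) :
    NormedSpace.exp x = ∑ i ∈ range k, (i !⁻¹ : 𝕂) • x ^ i := by
  rw [NormedSpace.exp_eq_tsum 𝕂]
  refine tsum_eq_sum fun i hi => ?_
  rw [pow_eq_zero_of_le (by simpa using hi) h, smul_zero]

lemma Fin.val_le_val_of_strictMono {n m : ℕ} {s : Fin n → Fin m} (hs : StrictMono s) (i : Fin n) :
    (i : ℕ) ≤ s i := by
  simpa using card_le_card_of_injOn s (fun j hj => by simpa using hs.monotone (mem_Iic.1 hj))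
    hs.injective.injOn (s := Iic i) (t := Iic (s i))

lemma Real.tendsto_rpow_neg_atTop_ite {e : ℝ} (he : 0 ≤ e) :
    Tendsto (fun t : ℝ => t ^ (-e)) atTop (𝓝 (if e = 0 then 1 else 0)) := by
  split_ifs with h
  · refine tendsto_const_nhds.congr' ?_
    filter_upwards [eventually_gt_atTop 0] with t ht
    simp [h]
  · exact tendsto_rpow_neg_atTop (he.lt_of_ne' h)

lemma tendsto_log_div_of_eventuallyEq {f g : ℝ → ℝ} {a b L : ℝ} (hL : 0 < L)
    (hg : Tendsto g atTop (𝓝 L)) (hf : f =ᶠ[atTop] fun t => Real.exp (a * t) * t ^ b * g t) :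
    Tendsto (fun t => Real.log (f t) / t) atTop (𝓝 a) ∧
      Tendsto (fun t => (Real.log (f t) - a * t) / Real.log t) atTop (𝓝 b) := by
  have hlog : ∀ᶠ t in atTop, Real.log (f t) = a * t + b * Real.log t + Real.log (g t) := by
    filter_upwards [hf, eventually_gt_atTop 0, hg.eventually (eventually_gt_nhds hL)]
      with t hft ht hgt
    rw [hft, Real.log_mul (by positivity) hgt.ne', Real.log_mul (by positivity) (by positivity),
      Real.log_exp, Real.log_rpow ht]
  have hlogg : Tendsto (fun t => Real.log (g t)) atTop (𝓝 (Real.log L)) := hg.log hL.ne'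
  constructor
  · have hsum : Tendsto (fun t => a + b * (Real.log t / t) + Real.log (g t) / t) atTop
        (𝓝 (a + b * 0 + 0)) :=
      (tendsto_const_nhds.add (Real.isLittleO_log_id_atTop.tendsto_div_nhds_zero.const_mul b)).add
        (hlogg.div_atTop tendsto_id)
    rw [mul_zero, add_zero, add_zero] at hsum
    refine hsum.congr' ?_
    filter_upwards [hlog, eventually_gt_atTop 0] with t hlogt ht
    rw [hlogt]
    field_simp
  · have hsum : Tendsto (fun t => b + Real.log (g t) / Real.log t) atTop (𝓝 (b + 0)) :=
      tendsto_const_nhds.add (hlogg.div_atTop Real.tendsto_log_atTop)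
    rw [add_zero] at hsum
    refine hsum.congr' ?_
    filter_upwards [hlog, eventually_gt_atTop 1] with t hlogt ht
    have : Real.log t ≠ 0 := (Real.log_pos ht).ne'
    rw [hlogt]
    field_simp
    ring

lemma Fin.sum_univ_val_cast (n : ℕ) : ∑ j : Fin n, (j : ℝ) = n * (n - 1) / 2 := by
  induction n with
  | zero => simp
  | succ n ih =>
    rw [Fin.sum_univ_castSucc]
    simp only [Fin.val_castSucc, Fin.val_last, ih]
    push_cast
    ring

section CauchyBinet

variable {R : Type*} [CommRing R] {n m : ℕ}

lemma Matrix.det_mul_eq_sum_det_submatrix_mul_prod (A : Matrix (Fin n) (Fin m) R)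
    (B : Matrix (Fin m) (Fin n) R) :
    (A * B).det = ∑ p : Fin n → Fin m, (A.submatrix id p).det * ∏ i, B (p i) i := by
  simp only [det_apply', mul_apply, prod_univ_sum, mul_sum, Fintype.piFinset_univ, sum_mul]
  rw [Finset.sum_comm]
  refine sum_congr rfl fun p _ => sum_congr rfl fun σ _ => ?_
  rw [prod_mul_distrib, mul_assoc]
  rfl

lemma Tuple.sort_comp_perm {s : Fin n → Fin m} (hs : StrictMono s) (σ : Perm (Fin n)) :
    Tuple.sort (s ∘ σ) = σ⁻¹ := by
  have hsorted : (s ∘ σ) ∘ (σ⁻¹ : Perm (Fin n)) = s := by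
    funext i
    simp
  have h := Tuple.unique_monotone (Tuple.monotone_sort (s ∘ σ)) (hsorted ▸ hs.monotone)
  ext i
  exact congrArg Fin.val ((hs.injective.comp σ.injective) (congrFun h i))

def strictMonoProdPermEquivInjective (n m : ℕ) :
    {s : Fin n → Fin m // StrictMono s} × Perm (Fin n) ≃
      {p : Fin n → Fin m // Function.Injective p} where
  toFun x := ⟨x.1.1 ∘ x.2, x.1.2.injective.comp x.2.injective⟩
  invFun p := ⟨⟨p.1 ∘ Tuple.sort p.1, (Tuple.monotone_sort p.1).strictMono_of_injective
      (p.2.comp (Tuple.sort p.1).injective)⟩, (Tuple.sort p.1)⁻¹⟩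
  left_inv := by
    rintro ⟨s, σ⟩
    ext i
    · simp [Tuple.sort_comp_perm s.2]
    · simp [Tuple.sort_comp_perm s.2]
  right_inv := by
    rintro ⟨p, hp⟩
    ext i
    simp

theorem Matrix.det_mul_eq_sum_strictMono (A : Matrix (Fin n) (Fin m) R)
    (B : Matrix (Fin m) (Fin n) R) :
    (A * B).det = ∑ s : {s : Fin n → Fin m // StrictMono s},
      (A.submatrix id s.1).det * (B.submatrix s.1 id).det := by
  have hinj : ∀ p : Fin n → Fin m, ¬ Function.Injective p → (A.submatrix id p).det = 0 := by
    intro p hp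
    obtain ⟨i, j, hpij, hij⟩ := Function.not_injective_iff.1 hp
    exact det_zero_of_column_eq hij fun k => by simp [hpij]
  have hperm (s : Fin n → Fin m) (σ : Perm (Fin n)) :
      (A.submatrix id (s ∘ σ)).det = (Perm.sign σ : ℤ) * (A.submatrix id s).det :=
    det_permute' σ (A.submatrix id s)
  -- Drop the non-injective `p`, write the injective ones as `s ∘ σ`, and resum over `σ`.
  rw [det_mul_eq_sum_det_submatrix_mul_prod, ← sum_filter_of_ne fun p _ h =>
      by_contra fun hp => h (by rw [hinj p hp, zero_mul]),
    sum_subtype (p := Function.Injective) _ (fun p => by simp)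
      fun p => (A.submatrix id p).det * ∏ i, B (p i) i,
    ← (strictMonoProdPermEquivInjective n m).sum_comp, Fintype.sum_prod_type]
  refine sum_congr rfl fun s _ => ?_
  simp only [strictMonoProdPermEquivInjective, Equiv.coe_fn_mk, hperm, det_apply' (B.submatrix _ _),
    mul_sum]
  refine sum_congr rfl fun σ _ => ?_
  simp only [Function.comp_apply, submatrix_apply, id_eq]
  ring

end CauchyBinet

section Rescale

variable {n m : ℕ}

noncomputable def powRescale (A : Matrix (Fin n) (Fin m) ℝ) (a : Fin n → ℝ) (t : ℝ) :
    Matrix (Fin n) (Fin m) ℝ :=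
  diagonal (fun j => t ^ a j) * A * diagonal (fun k : Fin m => t ^ (-(k : ℝ)))

lemma det_powRescale_submatrix (A : Matrix (Fin n) (Fin m) ℝ) (a : Fin n → ℝ) {t : ℝ} (ht : 0 < t)
    (s : Fin n → Fin m) :
    ((powRescale A a t).submatrix id s).det =
      t ^ (∑ j, a j - ∑ i, (s i : ℝ)) * (A.submatrix id s).det := by
  have : (powRescale A a t).submatrix id s =
      diagonal (fun j => t ^ a j) * A.submatrix id s * diagonal (fun i => t ^ (-(s i : ℝ))) := by
    ext j i
    simp [powRescale, mul_diagonal, diagonal_mul]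
  rw [this, det_mul, det_mul, det_diagonal, det_diagonal, sub_eq_add_neg, ← sum_neg_distrib,
    Real.rpow_add ht, Real.rpow_sum_of_pos ht, Real.rpow_sum_of_pos ht]
  ring

lemma sq_det_powRescale_submatrix_div (A : Matrix (Fin n) (Fin m) ℝ) (a : Fin n → ℝ) {t : ℝ}
    (ht : 0 < t) (s : Fin n → Fin m) :
    ((powRescale A a t).submatrix id s).det ^ 2 / t ^ (2 * ∑ j, (a j - j)) =
      (A.submatrix id s).det ^ 2 * t ^ (-(2 * ∑ i, ((s i : ℝ) - i))) := by
  rw [det_powRescale_submatrix A a ht s, mul_pow, ← Real.rpow_mul_natCast ht.le,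
    mul_div_right_comm, ← Real.rpow_sub ht, mul_comm]
  congr 2
  simp only [sum_sub_distrib]
  push_cast
  ring

theorem exists_tendsto_det_powRescale_mul_transpose (A : Matrix (Fin n) (Fin m) ℝ)
    (a : Fin n → ℝ) (h : n ≤ m) (hA : (A.submatrix id (Fin.castLE h)).det ≠ 0) :
    ∃ L > 0, Tendsto (fun t => (powRescale A a t * (powRescale A a t)ᵀ).det /
      t ^ (2 * ∑ j, (a j - j))) atTop (𝓝 L) := by
  set e : {s : Fin n → Fin m // StrictMono s} → ℝ := fun s => 2 * ∑ i, ((s.1 i : ℝ) - i)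
  have he (s) : 0 ≤ e s := mul_nonneg zero_le_two <| sum_nonneg fun i _ =>
    sub_nonneg.2 (by exact_mod_cast Fin.val_le_val_of_strictMono s.2 i)
  let s₀ : {s : Fin n → Fin m // StrictMono s} := ⟨Fin.castLE h, Fin.strictMono_castLE h⟩
  have he₀ : e s₀ = 0 := by simp [e, s₀]
  refine ⟨∑ s, (A.submatrix id s.1).det ^ 2 * if e s = 0 then 1 else 0, ?_, ?_⟩
  · refine lt_of_lt_of_le ?_ (single_le_sum (fun s _ => ?_) (mem_univ s₀))
    · simp only [he₀, if_true, mul_one]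
      exact pow_two_pos_of_ne_zero hA
    · positivity
  · refine (tendsto_finsetSum _ fun s _ =>
      (Real.tendsto_rpow_neg_atTop_ite (he s)).const_mul _).congr' ?_
    filter_upwards [eventually_gt_atTop 0] with t ht
    rw [det_mul_eq_sum_strictMono, sum_div]
    refine sum_congr rfl fun s _ => ?_
    rw [← transpose_submatrix, det_transpose, ← sq, sq_det_powRescale_submatrix_div A a ht]

end Rescale

lemma gramVol_eq_sqrt_det {n m : ℕ} (w : Fin n → Fin m → ℝ) :
    gramVol w = √(of w * (of w)ᵀ).det := by
  rw [gramVol]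
  congr 2

lemma gramVol_smul {n m : ℕ} (c : ℝ) (w : Fin n → Fin m → ℝ) :
    gramVol (c • w) = |c| ^ n * gramVol w := by
  have : of (c • w) = c • of w := rfl
  rw [gramVol_eq_sqrt_det, gramVol_eq_sqrt_det, this, transpose_smul, Matrix.smul_mul,
    Matrix.mul_smul, smul_smul, det_smul, Fintype.card_fin,
    Real.sqrt_mul (pow_nonneg (mul_self_nonneg c) n), ← abs_mul_abs_self, mul_pow,
    Real.sqrt_mul_self (by positivity)]

lemma shiftMatrix_pow_apply (m i : ℕ) (a b : Fin m) :
    (shiftMatrix m ^ i) a b = if (a : ℕ) + i = b then 1 else 0 := by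
  induction i generalizing b with
  | zero => simp [one_apply, Fin.ext_iff]
  | succ i ih =>
    simp only [pow_succ, mul_apply, ih]
    simp only [shiftMatrix, of_apply, ite_mul, one_mul, zero_mul]
    rw [Fin.sum_univ_eq_sum_range
      (fun c => if (a : ℕ) + i = c then if c + 1 = (b : ℕ) then (1 : ℝ) else 0 else 0),
      sum_ite_eq]
    split_ifs <;> grind

lemma shiftMatrix_pow_eq_zero {m i : ℕ} (h : m ≤ i) : shiftMatrix m ^ i = 0 := by
  ext a b
  rw [shiftMatrix_pow_apply, Matrix.zero_apply, if_neg (by omega)]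

lemma exp_smul_shiftMatrix_apply (m : ℕ) (t : ℝ) (k l : Fin m) :
    NormedSpace.exp (t • shiftMatrix m) k l =
      if k ≤ l then t ^ ((l : ℕ) - k) / ((l : ℕ) - k)! else 0 := by
  rw [NormedSpace.exp_eq_sum_range_of_pow_eq_zero (𝕂 := ℝ) (k := m)
    (by rw [smul_pow, shiftMatrix_pow_eq_zero le_rfl, smul_zero])]
  simp only [Matrix.sum_apply, Matrix.smul_apply, smul_pow, smul_smul, shiftMatrix_pow_apply,
    smul_eq_mul, mul_ite, mul_one, mul_zero]
  split_ifs with hkl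
  · rw [sum_eq_single_of_mem ((l : ℕ) - k) (mem_range.2 (by omega))
      fun i _ hi => if_neg (by omega), if_pos (by omega), div_eq_inv_mul, mul_comm]
  · exact sum_eq_zero fun i _ => if_neg (by rw [Fin.le_iff_val_le_val] at hkl; omega)

lemma exp_smul_jordanBlock (m : ℕ) (lam t : ℝ) :
    NormedSpace.exp (t • (lam • (1 : Matrix (Fin m) (Fin m) ℝ) + shiftMatrix m)) =
      Real.exp (t * lam) • NormedSpace.exp (t • shiftMatrix m) := by
  rw [smul_add, smul_smul, Matrix.exp_add_of_commute _ _ ((Commute.one_left _).smul_left _),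
    smul_one_eq_diagonal, exp_diagonal, Pi.exp_def, Real.exp_eq_exp_ℝ, ← smul_one_eq_diagonal,
    smul_mul, one_mul]

section JordanChain

variable {n m : ℕ}

noncomputable def jordanChainCoeff (r : Fin n → Fin m) : Matrix (Fin n) (Fin m) ℝ :=
  of fun j k => if k ≤ r j then (((r j : ℕ) - k)! : ℝ)⁻¹ else 0

lemma powRescale_jordanChainCoeff_apply (r : Fin n → Fin m) {t : ℝ} (ht : 0 < t) (j : Fin n)
    (k : Fin m) :
    powRescale (jordanChainCoeff r) (fun j => (r j : ℝ)) t j k =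
      NormedSpace.exp (t • shiftMatrix m) k (r j) := by
  simp only [powRescale, diagonal_mul, mul_diagonal, jordanChainCoeff, of_apply,
    exp_smul_shiftMatrix_apply]
  split_ifs with hkr
  · rw [Fin.le_iff_val_le_val] at hkr
    rw [← Real.rpow_natCast, Nat.cast_sub hkr, sub_eq_add_neg, Real.rpow_add ht]
    ring
  · simp

lemma det_jordanChainCoeff_submatrix_castLE_ne_zero {r : Fin n → Fin m}
    (hr : Function.Injective r) (h : n ≤ m) :
    ((jordanChainCoeff r).submatrix id (Fin.castLE h)).det ≠ 0 := by
  have hdesc : (∏ j, ((r j : ℕ)! : ℝ)) * ((jordanChainCoeff r).submatrix id (Fin.castLE h)).det =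
      (of fun j i : Fin n => (descPochhammer ℝ i).eval ((r j : ℕ) : ℝ)).det := by
    rw [← det_mul_column]
    congr 1
    ext j i
    simp only [jordanChainCoeff, of_apply, submatrix_apply, id, Fin.le_iff_val_le_val,
      Fin.val_castLE, descPochhammer_eval_eq_descFactorial]
    split_ifs with hir
    · rw [← Nat.factorial_mul_descFactorial hir]
      push_cast
      field_simp
    · simp [Nat.descFactorial_eq_zero_iff_lt.2 (not_le.1 hir)]
  rw [← det_eval_matrixOfPolynomials_eq_det_vandermonde _ _ (fun i => descPochhammer_natDegree ℝ i)
    (fun i => monic_descPochhammer ℝ i)] at hdesc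
  have hcast : Function.Injective fun j => ((r j : ℕ) : ℝ) :=
    (Nat.cast_injective.comp Fin.val_injective).comp hr
  exact fun h0 => det_vandermonde_ne_zero_iff.2 hcast (by rw [← hdesc, h0, mul_zero])

end JordanChain

lemma gramVol_exp_smul_jordanBlock_mulVec_single {n m : ℕ} (lam : ℝ) (r : Fin n → Fin m) {t : ℝ}
    (ht : 0 < t) :
    gramVol (fun j => (NormedSpace.exp (t • (lam • (1 : Matrix (Fin m) (Fin m) ℝ) +
        shiftMatrix m))).mulVec (Pi.single (r j) 1)) =
      Real.exp (n * lam * t) * √(powRescale (jordanChainCoeff r) (fun j => (r j : ℝ)) t *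
        (powRescale (jordanChainCoeff r) (fun j => (r j : ℝ)) t)ᵀ).det := by
  have hvec : (fun j => (NormedSpace.exp (t • (lam • (1 : Matrix (Fin m) (Fin m) ℝ) +
      shiftMatrix m))).mulVec (Pi.single (r j) 1)) =
      Real.exp (t * lam) •
        fun j k => powRescale (jordanChainCoeff r) (fun j => (r j : ℝ)) t j k := by
    funext j k
    simp only [exp_smul_jordanBlock, mulVec_single_one, Pi.smul_apply, col_apply,
      Matrix.smul_apply, powRescale_jordanChainCoeff_apply r ht]
  rw [hvec, gramVol_smul, gramVol_eq_sqrt_det, abs_of_pos (Real.exp_pos _), ← Real.exp_nat_mul,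
    show (n : ℝ) * (t * lam) = n * lam * t by ring]
  rfl

/-- For a single Jordan block `K = λI + N` of size `m` and strictly increasing
chain indices `r 0 < … < r (n-1)` (0-indexed; the 1-indexed `r_j` is `r j + 1`),
the volume of the parallelepiped spanned by `exp(tK) e_{r j}` satisfies
`(1/t)·log Vol → n·λ` and
`(log Vol - nλt)/log t → (∑_j r_j) - n(n+1)/2` as `t → ∞`. -/
theorem stmt_9 (m n : ℕ) (lam : ℝ) (K : Matrix (Fin m) (Fin m) ℝ)
    (hK : K = lam • (1 : Matrix (Fin m) (Fin m) ℝ) + shiftMatrix m)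
    (r : Fin n → Fin m) (hr : StrictMono r) :
    Tendsto (fun t : ℝ =>
        Real.log (gramVol (fun j =>
          (NormedSpace.exp (t • K)).mulVec (Pi.single (r j) 1))) / t)
      atTop (nhds (n * lam)) ∧
    Tendsto (fun t : ℝ =>
        (Real.log (gramVol (fun j =>
          (NormedSpace.exp (t • K)).mulVec (Pi.single (r j) 1)))
          - n * lam * t) / Real.log t)
      atTop (nhds ((∑ j : Fin n, ((r j : ℕ) + 1 : ℝ)) - n * (n + 1) / 2)) := by
  subst hK
  have hnm : n ≤ m := by simpa using Fintype.card_le_of_injective r hr.injective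
  obtain ⟨L, hL, hlim⟩ := exists_tendsto_det_powRescale_mul_transpose (jordanChainCoeff r)
    (fun j => (r j : ℝ)) hnm (det_jordanChainCoeff_submatrix_castLE_ne_zero hr.injective hnm)
  have hb : ∑ j, ((r j : ℝ) - j) = ∑ j : Fin n, ((r j : ℕ) + 1 : ℝ) - n * (n + 1) / 2 := by
    rw [sum_sub_distrib, Fin.sum_univ_val_cast, sum_add_distrib]
    simp only [sum_const, card_univ, Fintype.card_fin, nsmul_eq_mul, mul_one]
    ring
  rw [← hb]
  refine tendsto_log_div_of_eventuallyEq (Real.sqrt_pos.2 hL) hlim.sqrt ?_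
  filter_upwards [eventually_gt_atTop 0] with t ht
  rw [gramVol_exp_smul_jordanBlock_mulVec_single lam r ht, Real.sqrt_div' _ (by positivity),
    mul_comm 2, Real.rpow_mul ht.le, Real.rpow_two, Real.sqrt_sq (by positivity),
    mul_assoc _ (t ^ _), mul_div_cancel₀ _ (by positivity)]
end
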